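/- Let R be a strongly ℤ-graded ring with grading 𝒜. Then R, the subring R_{≤0}, and the subring R_{≥0} are each projective as left 𝒜 0-modules (via multiplication). Consequently, every projective module over R (respectively over R_{≤0}, respectively over R_{≥0}) is projective as an 𝒜 0-module after restriction of scalars along the inclusion of 𝒜 0. -/

import Mathlib

universe u

/-- A ℤ-graded ring is *strongly graded* if `𝒜 i * 𝒜 j = 𝒜 (i + j)` for all `i j`. -/
def IsStronglyGraded {R : Type*} [Ring R] (𝒜 : ℤ → Submodule ℤ R) : Prop :=
  ∀ i j : ℤ, 𝒜 i * 𝒜 j = 𝒜 (i + j)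

variable {R : Type*} [Ring R] (𝒜 : ℤ → Submodule ℤ R) [GradedRing 𝒜]

/-- `R_{≤k}`, the sum of the homogeneous components of degree at most `k`. -/
def Rle (k : ℤ) : Submodule ℤ R := ⨆ n ≤ k, 𝒜 n

/-- `R_{≥k}`, the sum of the homogeneous components of degree at least `k`. -/
def Rge (k : ℤ) : Submodule ℤ R := ⨆ n ≥ k, 𝒜 n

theorem Rle_mul_Rle (a b : ℤ) : Rle 𝒜 a * Rle 𝒜 b ≤ Rle 𝒜 (a + b) := by
  rw [Rle, Rle, Submodule.iSup_mul]
  refine iSup_le fun n => ?_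
  rw [Submodule.iSup_mul]
  refine iSup_le fun hn => ?_
  rw [Submodule.mul_iSup]
  refine iSup_le fun m => ?_
  rw [Submodule.mul_iSup]
  refine iSup_le fun hm => ?_
  refine le_trans (Submodule.mul_le.2 fun x hx y hy => SetLike.mul_mem_graded hx hy) ?_
  exact le_iSup₂_of_le (n + m) (add_le_add hn hm) le_rfl

theorem Rge_mul_Rge (a b : ℤ) : Rge 𝒜 a * Rge 𝒜 b ≤ Rge 𝒜 (a + b) := by
  rw [Rge, Rge, Submodule.iSup_mul]
  refine iSup_le fun n => ?_
  rw [Submodule.iSup_mul]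
  refine iSup_le fun hn => ?_
  rw [Submodule.mul_iSup]
  refine iSup_le fun m => ?_
  rw [Submodule.mul_iSup]
  refine iSup_le fun hm => ?_
  refine le_trans (Submodule.mul_le.2 fun x hx y hy => SetLike.mul_mem_graded hx hy) ?_
  exact le_iSup₂_of_le (n + m) (add_le_add hn hm) le_rfl

theorem grade_mem_Rle {k : ℤ} {x : R} (hx : x ∈ 𝒜 k) : x ∈ Rle 𝒜 k :=
  Submodule.mem_iSup_of_mem k (Submodule.mem_iSup_of_mem le_rfl hx)

theorem grade_mem_Rge {k : ℤ} {x : R} (hx : x ∈ 𝒜 k) : x ∈ Rge 𝒜 k :=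
  Submodule.mem_iSup_of_mem k (Submodule.mem_iSup_of_mem le_rfl hx)

/-- The subring `R_{≤0}` of `R`. -/
def RleSubring : Subring R where
  carrier := Rle 𝒜 0
  zero_mem' := zero_mem _
  add_mem' := fun h1 h2 => add_mem h1 h2
  neg_mem' := fun h => neg_mem h
  one_mem' := grade_mem_Rle 𝒜 (SetLike.one_mem_graded 𝒜)
  mul_mem' := fun h1 h2 => by
    simpa using Rle_mul_Rle 𝒜 0 0 (Submodule.mul_mem_mul h1 h2)

/-- The subring `R_{≥0}` of `R`. -/
def RgeSubring : Subring R where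
  carrier := Rge 𝒜 0
  zero_mem' := zero_mem _
  add_mem' := fun h1 h2 => add_mem h1 h2
  neg_mem' := fun h => neg_mem h
  one_mem' := grade_mem_Rge 𝒜 (SetLike.one_mem_graded 𝒜)
  mul_mem' := fun h1 h2 => by
    simpa using Rge_mul_Rge 𝒜 0 0 (Submodule.mul_mem_mul h1 h2)

/-- The inclusion of the subring `𝒜 0` into `R`. -/
def incl0 : (𝒜 0) →+* R where
  toFun a := (a : R)
  map_one' := rfl
  map_mul' _ _ := rfl
  map_zero' := rfl
  map_add' _ _ := rfl

/-- The inclusion of the subring `𝒜 0` into the subring `R_{≤0}`. -/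
def incl0le : (𝒜 0) →+* RleSubring 𝒜 where
  toFun a := ⟨(a : R), grade_mem_Rle 𝒜 a.2⟩
  map_one' := rfl
  map_mul' _ _ := rfl
  map_zero' := rfl
  map_add' _ _ := rfl

/-- The inclusion of the subring `𝒜 0` into the subring `R_{≥0}`. -/
def incl0ge : (𝒜 0) →+* RgeSubring 𝒜 where
  toFun a := ⟨(a : R), grade_mem_Rge 𝒜 a.2⟩
  map_one' := rfl
  map_mul' _ _ := rfl
  map_zero' := rfl
  map_add' _ _ := rfl

/-- Restriction of scalars along `𝒜 0 → R`. -/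
instance restrictFromR (M : Type u) [AddCommMonoid M] [Module R M] :
    Module (𝒜 0) M :=
  Module.compHom M (incl0 𝒜)

/-- Restriction of scalars along `𝒜 0 → R_{≤0}`. -/
instance restrictFromRle (M : Type u) [AddCommMonoid M] [Module (RleSubring 𝒜) M] :
    Module (𝒜 0) M :=
  Module.compHom M (incl0le 𝒜)

/-- Restriction of scalars along `𝒜 0 → R_{≥0}`. -/
instance restrictFromRge (M : Type u) [AddCommMonoid M] [Module (RgeSubring 𝒜) M] :
    Module (𝒜 0) M :=
  Module.compHom M (incl0ge 𝒜)

/-! Strong grading gives `1 ∈ 𝒜 (-n) * 𝒜 n`, say `1 = ∑ yᵢ xᵢ` with `yᵢ ∈ 𝒜 (-n)` and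
`xᵢ ∈ 𝒜 n`. Then `c ↦ (c yᵢ)ᵢ` and `(aᵢ) ↦ ∑ aᵢ xᵢ` exhibit `𝒜 n` as an `𝒜 0`-direct summand
of `(𝒜 0)ᵏ`, so `R = ⨁ₙ 𝒜 n` is `𝒜 0`-projective, and so are its direct summands `R_{≤0}` and
`R_{≥0}`. Finally, projectivity passes up a tower `𝒜 0 → S → M`: a projective `S`-module is a
summand of a free `S`-module, i.e. of a direct sum of copies of the `𝒜 0`-projective `S`. -/

theorem Submodule.exists_fin_sum_mul_eq_of_mem_mul {S A : Type*} [CommSemiring S] [Semiring A]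
    [Algebra S A] {P Q : Submodule S A} {z : A} (hz : z ∈ P * Q) :
    ∃ (k : ℕ) (y x : Fin k → A), (∀ i, y i ∈ P) ∧ (∀ i, x i ∈ Q) ∧ ∑ i, y i * x i = z := by
  rw [Submodule.mul_eq_span_mul_set, Submodule.mem_span_set'] at hz
  obtain ⟨k, c, g, rfl⟩ := hz
  choose y hy x hx hyx using fun i => Set.mem_mul.1 (g i).2
  refine ⟨k, fun i => c i • y i, x, fun i => P.smul_mem _ (hy i), hx, ?_⟩
  simp only [smul_mul_assoc, hyx]

theorem iSupIndep.isCompl_biSup_not {ι α : Type*} [CompleteLattice α] [IsModularLattice α]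
    [IsCompactlyGenerated α] {f : ι → α} (hf : iSupIndep f) (htop : ⨆ i, f i = ⊤)
    (p : ι → Prop) : IsCompl (⨆ (i) (_ : p i), f i) (⨆ (i) (_ : ¬p i), f i) where
  disjoint := hf.disjoint_biSup_biSup (s := {i | p i}) (t := {i | ¬p i})
    (Set.disjoint_left.2 fun _ hp hnp => hnp hp)
  codisjoint := codisjoint_iff.2 ((iSup_split f p).symm.trans htop)

theorem Module.Projective.of_isCompl {A M : Type*} [Ring A] [AddCommGroup M] [Module A M]
    [Module.Projective A M] {p q : Submodule A M} (h : IsCompl p q) : Module.Projective A p :=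
  .of_split p.subtype (p.projectionOnto q h) (LinearMap.ext (p.projectionOnto_apply_left h))

theorem Module.Projective.trans {A S M : Type*} [Semiring A] [Semiring S] [Module A S]
    [IsScalarTower A S S] [AddCommMonoid M] [Module A M] [Module S M] [IsScalarTower A S M]
    [Module.Projective A S] [Module.Projective S M] : Module.Projective A M := by
  classical
  obtain ⟨s, hs⟩ := Module.projective_def'.1 (inferInstance : Module.Projective S M)
  have : Module.Projective A (M →₀ S) := .of_equiv (finsuppLequivDFinsupp A).symm
  exact .of_split (s.restrictScalars A) ((Finsupp.linearCombination S id).restrictScalars A)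
    (LinearMap.ext fun m => LinearMap.congr_fun hs m)

@[simp]
theorem gradeZero_smul_eq_mul (a : 𝒜 0) (r : R) : a • r = (a : R) * r := rfl

def gradeSubmodule (n : ℤ) : Submodule (𝒜 0) R where
  carrier := 𝒜 n
  add_mem' := add_mem
  zero_mem' := zero_mem _
  smul_mem' a _ hx := by simpa using SetLike.mul_mem_graded a.2 hx

@[simp]
theorem mem_gradeSubmodule {n : ℤ} {x : R} : x ∈ gradeSubmodule 𝒜 n ↔ x ∈ 𝒜 n := Iff.rfl

theorem gradeSubmodule_isInternal : DirectSum.IsInternal (gradeSubmodule 𝒜) :=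
  DirectSum.Decomposition.isInternal 𝒜

theorem mem_iSup_gradeSubmodule_iff (p : ℤ → Prop) {x : R} :
    x ∈ ⨆ (n) (_ : p n), gradeSubmodule 𝒜 n ↔ x ∈ ⨆ (n) (_ : p n), 𝒜 n := by
  simp only [← Submodule.mem_toAddSubmonoid, Submodule.iSup_toAddSubmonoid]
  rfl

instance isScalarTower_restrictFromR (M : Type*) [AddCommMonoid M] [Module R M] :
    IsScalarTower (𝒜 0) R M :=
  ⟨fun a => mul_smul (incl0 𝒜 a)⟩

instance isScalarTower_restrictFromRle (M : Type*) [AddCommMonoid M] [Module (RleSubring 𝒜) M] :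
    IsScalarTower (𝒜 0) (RleSubring 𝒜) M :=
  ⟨fun a => mul_smul (incl0le 𝒜 a)⟩

instance isScalarTower_restrictFromRge (M : Type*) [AddCommMonoid M] [Module (RgeSubring 𝒜) M] :
    IsScalarTower (𝒜 0) (RgeSubring 𝒜) M :=
  ⟨fun a => mul_smul (incl0ge 𝒜 a)⟩

namespace IsStronglyGraded

variable {𝒜}

theorem projective_gradeSubmodule (h : IsStronglyGraded 𝒜) (n : ℤ) :
    Module.Projective (𝒜 0) (gradeSubmodule 𝒜 n) := by
  have hone : (1 : R) ∈ 𝒜 (-n) * 𝒜 n := by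
    rw [h, neg_add_cancel]
    exact SetLike.one_mem_graded 𝒜
  obtain ⟨k, y, x, hy, hx, hyx⟩ := Submodule.exists_fin_sum_mul_eq_of_mem_mul hone
  let coeff : gradeSubmodule 𝒜 n →ₗ[𝒜 0] Fin k → 𝒜 0 :=
    { toFun c i := ⟨c * y i, by
        simpa using SetLike.mul_mem_graded ((mem_gradeSubmodule 𝒜).1 c.2) (hy i)⟩
      map_add' c d := by ext; simp [add_mul]
      map_smul' a c := by ext; simp [mul_assoc] }
  refine .of_split coeff (Fintype.linearCombination (𝒜 0) fun i => ⟨x i, hx i⟩)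
    (LinearMap.ext fun c => Subtype.ext ?_)
  simp [coeff, Fintype.linearCombination_apply, mul_assoc, ← Finset.mul_sum, hyx]

theorem projective (h : IsStronglyGraded 𝒜) : Module.Projective (𝒜 0) R :=
  have := h.projective_gradeSubmodule
  let hi := gradeSubmodule_isInternal 𝒜
  .of_equiv (hi.submodule_iSupIndep.linearEquiv hi.submodule_iSup_eq_top)

theorem projective_iSup_gradeSubmodule (h : IsStronglyGraded 𝒜) (p : ℤ → Prop) :
    Module.Projective (𝒜 0) ↥(⨆ (n) (_ : p n), gradeSubmodule 𝒜 n) :=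
  have := h.projective
  let hi := gradeSubmodule_isInternal 𝒜
  .of_isCompl (hi.submodule_iSupIndep.isCompl_biSup_not hi.submodule_iSup_eq_top p)

theorem projective_subring_of_mem_iff (h : IsStronglyGraded 𝒜) {p : ℤ → Prop} {T : Subring R}
    [Module (𝒜 0) T] (hsmul : ∀ (a : 𝒜 0) (t : T), ((a • t : T) : R) = a * t)
    (hT : ∀ x, x ∈ T ↔ x ∈ ⨆ (n) (_ : p n), 𝒜 n) : Module.Projective (𝒜 0) T := by
  have := h.projective_iSup_gradeSubmodule p
  let e : ↥(⨆ (n) (_ : p n), gradeSubmodule 𝒜 n) ≃ₗ[𝒜 0] T :=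
    { toFun q := ⟨q, (hT q).2 ((mem_iSup_gradeSubmodule_iff 𝒜 p).1 q.2)⟩
      invFun t := ⟨t, (mem_iSup_gradeSubmodule_iff 𝒜 p).2 ((hT t).1 t.2)⟩
      map_add' _ _ := rfl
      map_smul' a q := Subtype.ext <| by simp [hsmul]
      left_inv _ := rfl
      right_inv _ := rfl }
  exact .of_equiv e

end IsStronglyGraded

/-- If `R` is strongly ℤ-graded then `R`, `R_{≤0}` and `R_{≥0}` are projective
left `𝒜 0`-modules, and consequently every projective module over `R`
(respectively over `R_{≤0}`, respectively over `R_{≥0}`) is projective as an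
`𝒜 0`-module after restriction of scalars. -/
theorem projective_over_grade_zero (h : IsStronglyGraded 𝒜) :
    Module.Projective (𝒜 0) R ∧
    Module.Projective (𝒜 0) (RleSubring 𝒜) ∧
    Module.Projective (𝒜 0) (RgeSubring 𝒜) ∧
    (∀ (M : Type u) [AddCommGroup M] [Module R M],
      Module.Projective R M → Module.Projective (𝒜 0) M) ∧
    (∀ (M : Type u) [AddCommGroup M] [Module (RleSubring 𝒜) M],
      Module.Projective (RleSubring 𝒜) M → Module.Projective (𝒜 0) M) ∧
    (∀ (M : Type u) [AddCommGroup M] [Module (RgeSubring 𝒜) M],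
      Module.Projective (RgeSubring 𝒜) M → Module.Projective (𝒜 0) M) := by
  have hR : Module.Projective (𝒜 0) R := h.projective
  have hle : Module.Projective (𝒜 0) (RleSubring 𝒜) :=
    h.projective_subring_of_mem_iff (fun _ _ => rfl) (fun _ => Iff.rfl)
  have hge : Module.Projective (𝒜 0) (RgeSubring 𝒜) :=
    h.projective_subring_of_mem_iff (fun _ _ => rfl) (fun _ => Iff.rfl)
  exact ⟨hR, hle, hge, fun _ _ _ _ => .trans (S := R),
    fun _ _ _ _ => .trans (S := RleSubring 𝒜), fun _ _ _ _ => .trans (S := RgeSubring 𝒜)⟩
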